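/- Let μ be a measure and let A_1, ..., A_n be measurable sets with μ(A_i) = 1 for all i. Fix a reference index r. Then the measure of the common intersection satisfies μ(⋂_{j=1}^n A_j) ≥ 2 - n + Σ_{j ≠ r} μ(A_r ∩ A_j). -/
import Mathlib


open MeasureTheory Finset

theorem stmt_0 {X : Type*} [MeasurableSpace X] (μ : Measure X) (n : ℕ) (hn : 1 ≤ n)
    (A : Fin n → Set X) (hA : ∀ i, MeasurableSet (A i)) (hμ : ∀ i, μ (A i) = 1)
    (r : Fin n) :
    2 - (n : ℝ) + ∑ j ∈ Finset.univ.erase r, (μ (A r ∩ A j)).toReal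
      ≤ (μ (⋂ j, A j)).toReal := by
  set S := ⋂ j, A j with hS
  have hSm : MeasurableSet S := MeasurableSet.iInter fun j => hA j
  have hSsub : S ⊆ A r := Set.iInter_subset A r
  have h1 : μ (A r) = 1 := hμ r
  -- split A r
  have hsplit : μ S + μ (A r \ S) = 1 := by
    have := measure_inter_add_diff (μ := μ) (A r) hSm
    rwa [Set.inter_eq_right.mpr hSsub, h1] at this
  have hsplitj : ∀ j, μ (A r ∩ A j) + μ (A r \ A j) = 1 := by
    intro j
    have := measure_inter_add_diff (μ := μ) (A r) (hA j)
    rwa [h1] at this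
  have hfinS : μ S ≠ ⊤ := by
    intro h; rw [h] at hsplit; simp at hsplit
  have hfinD : μ (A r \ S) ≠ ⊤ := by
    intro h; rw [h] at hsplit; simp at hsplit
  have hfinj : ∀ j, μ (A r ∩ A j) ≠ ⊤ := by
    intro j h; have := hsplitj j; rw [h] at this; simp at this
  have hfindj : ∀ j, μ (A r \ A j) ≠ ⊤ := by
    intro j h; have := hsplitj j; rw [h] at this; simp at this
  -- union decomposition
  have hunion : A r \ S = ⋃ j ∈ Finset.univ.erase r, (A r \ A j) := by
    ext x
    simp only [hS, Set.mem_diff, Set.mem_iInter, Set.mem_iUnion, Finset.mem_erase,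
      Finset.mem_univ, and_true, not_forall, exists_prop]
    constructor
    · rintro ⟨hxr, j, hj⟩
      exact ⟨j, fun h => hj (h ▸ hxr), hxr, hj⟩
    · rintro ⟨j, _, hxr, hj⟩
      exact ⟨hxr, j, hj⟩
  have hsub : μ (A r \ S) ≤ ∑ j ∈ Finset.univ.erase r, μ (A r \ A j) := by
    rw [hunion]
    exact measure_biUnion_finset_le _ _
  -- pass to reals
  have hsum : ((∑ j ∈ Finset.univ.erase r, μ (A r \ A j)).toReal)
      = ∑ j ∈ Finset.univ.erase r, (μ (A r \ A j)).toReal :=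
    ENNReal.toReal_sum fun j _ => hfindj j
  have hsubR : (μ (A r \ S)).toReal ≤ ∑ j ∈ Finset.univ.erase r, (μ (A r \ A j)).toReal := by
    rw [← hsum]
    exact ENNReal.toReal_mono (by rw [ENNReal.sum_ne_top]; exact fun j _ => hfindj j) hsub
  have hsplitR : (μ S).toReal + (μ (A r \ S)).toReal = 1 := by
    rw [← ENNReal.toReal_add hfinS hfinD, hsplit]; simp
  have hsplitjR : ∀ j, (μ (A r \ A j)).toReal = 1 - (μ (A r ∩ A j)).toReal := by
    intro j
    have := hsplitj j
    have h2 : (μ (A r ∩ A j)).toReal + (μ (A r \ A j)).toReal = 1 := by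
      rw [← ENNReal.toReal_add (hfinj j) (hfindj j), this]; simp
    linarith
  have hcard : (Finset.univ.erase r).card = n - 1 := by
    rw [Finset.card_erase_of_mem (Finset.mem_univ r), Finset.card_univ, Fintype.card_fin]
  have hsum2 : ∑ j ∈ Finset.univ.erase r, (μ (A r \ A j)).toReal
      = (n - 1 : ℝ) - ∑ j ∈ Finset.univ.erase r, (μ (A r ∩ A j)).toReal := by
    rw [Finset.sum_congr rfl fun j _ => hsplitjR j, Finset.sum_sub_distrib,
      Finset.sum_const, hcard]
    have : ((n - 1 : ℕ) : ℝ) = (n : ℝ) - 1 := by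
      push_cast [hn]; ring
    simp [this]
  linarith [hsubR, hsplitR, hsum2.symm ▸ hsubR]
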